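/- Vanishing of the curved L∞-algebra map μ₄(μ₀,e₁,e₂,f) for the flat DFT algebroid: for all smooth sections e₁, e₂ : ℝ^{2d} → ℝ^{2d} and every smooth function f : ℝ^{2d} → ℝ, ⟨e₁, D⟨e₂,Df⟩⟩ − ⟨e₂, D⟨e₁,Df⟩⟩ − ⟨[[e₁,e₂]], Df⟩ + N(e₁,e₂,Df) = 0. -/

import Mathlib

open scoped BigOperators

noncomputable section

/-- The index involution implementing the O(d,d) metric η with matrix [[0,1],[1,0]]:
η_{AB} = 1 iff B = σd d A. -/
def σd (d : ℕ) (A : Fin (2*d)) : Fin (2*d) :=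
  if h : (A : ℕ) < d then ⟨(A : ℕ) + d, by omega⟩
  else ⟨(A : ℕ) - d, by have := A.isLt; omega⟩

/-- A section of the DFT algebroid bundle over ℝ^{2d}. -/
abbrev Sec (d : ℕ) := (Fin (2*d) → ℝ) → Fin (2*d) → ℝ

/-- Partial derivative ∂_A f at x. -/
def pd {n : ℕ} (f : (Fin n → ℝ) → ℝ) (A : Fin n) (x : Fin n → ℝ) : ℝ :=
  fderiv ℝ f x (Pi.single A 1)

/-- The pairing ⟨e₁,e₂⟩ = η_{AB} e₁^A e₂^B. -/
def pair {d : ℕ} (e₁ e₂ : Sec d) (x : Fin (2*d) → ℝ) : ℝ :=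
  ∑ A, e₁ x A * e₂ x (σd d A)

/-- The derivative D : C^∞ → Γ(L), (Df)^A = (1/2) η^{AB} ∂_B f. -/
def Dsec {d : ℕ} (f : (Fin (2*d) → ℝ) → ℝ) : Sec d :=
  fun x A => (1/2) * pd f (σd d A) x

/-- The flat C-bracket of double field theory. -/
def cbr {d : ℕ} (e₁ e₂ : Sec d) : Sec d := fun x B =>
  (∑ A, e₁ x A * pd (fun y => e₂ y B) A x
    - (1/2) * ∑ A, e₁ x A * pd (fun y => e₂ y (σd d A)) (σd d B) x)
  - (∑ A, e₂ x A * pd (fun y => e₁ y B) A x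
    - (1/2) * ∑ A, e₂ x A * pd (fun y => e₁ y (σd d A)) (σd d B) x)

/-- SC_ρ(e₁,e₂)f = (1/2) η^{BC} ∂_B f η_{AD} (e₁^A ∂_C e₂^D − e₂^A ∂_C e₁^D). -/
def SCrho {d : ℕ} (e₁ e₂ : Sec d) (f : (Fin (2*d) → ℝ) → ℝ) (x : Fin (2*d) → ℝ) : ℝ :=
  (1/2) * ∑ B, pd f B x *
    ∑ A, (e₁ x A * pd (fun y => e₂ y (σd d A)) (σd d B) x
          - e₂ x A * pd (fun y => e₁ y (σd d A)) (σd d B) x)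

/-- The Nijenhuis-type tensor N(e₁,e₂,e₃). -/
def Nform {d : ℕ} (e₁ e₂ e₃ : Sec d) (x : Fin (2*d) → ℝ) : ℝ :=
  (1/3) * (pair (cbr e₁ e₂) e₃ x + pair (cbr e₂ e₃) e₁ x + pair (cbr e₃ e₁) e₂ x)

/-- The Jacobiator of the C-bracket. -/
def Jac {d : ℕ} (e₁ e₂ e₃ : Sec d) : Sec d := fun x B =>
  cbr (cbr e₁ e₂) e₃ x B + cbr (cbr e₂ e₃) e₁ x B + cbr (cbr e₃ e₁) e₂ x B

/-- SC_Jac(e₁,e₂,e₃) = Jac(e₁,e₂,e₃) − D N(e₁,e₂,e₃). -/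
def SCJac {d : ℕ} (e₁ e₂ e₃ : Sec d) : Sec d := fun x B =>
  Jac e₁ e₂ e₃ x B - Dsec (Nform e₁ e₂ e₃) x B

/-! ### Auxiliary lemmas -/

lemma σd_val {d : ℕ} (A : Fin (2*d)) :
    ((σd d A : Fin (2*d)) : ℕ) = if (A : ℕ) < d then (A : ℕ) + d else (A : ℕ) - d := by
  unfold σd; split_ifs <;> rfl

lemma σd_σd {d : ℕ} (A : Fin (2*d)) : σd d (σd d A) = A := by
  have hA := A.isLt
  apply Fin.ext
  rw [σd_val, σd_val]
  split_ifs <;> omega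

lemma σd_inv {d : ℕ} : Function.Involutive (σd d) := σd_σd

lemma pd_const_mul {n : ℕ} (c : ℝ) (g : (Fin n → ℝ) → ℝ) (A : Fin n) (x : Fin n → ℝ)
    (hg : DifferentiableAt ℝ g x) :
    pd (fun y => c * g y) A x = c * pd g A x := by
  unfold pd
  rw [fderiv_const_mul hg]
  simp

lemma pd_sum_mul {n m : ℕ} (u v : Fin m → (Fin n → ℝ) → ℝ) (A : Fin n) (x : Fin n → ℝ)
    (hu : ∀ B, DifferentiableAt ℝ (u B) x) (hv : ∀ B, DifferentiableAt ℝ (v B) x) :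
    pd (fun y => ∑ B, u B y * v B y) A x
      = ∑ B, (pd (u B) A x * v B x + u B x * pd (v B) A x) := by
  have H : HasFDerivAt (fun y => ∑ B, u B y * v B y)
      (∑ B, (u B x • fderiv ℝ (v B) x + v B x • fderiv ℝ (u B) x)) x :=
    HasFDerivAt.fun_sum fun B _ => ((hu B).hasFDerivAt).mul ((hv B).hasFDerivAt)
  unfold pd
  rw [H.fderiv]
  simp [ContinuousLinearMap.sum_apply]
  exact Finset.sum_congr rfl fun B _ => by ring

lemma contDiff_pd {n : ℕ} (f : (Fin n → ℝ) → ℝ) (hf : ContDiff ℝ (⊤ : ℕ∞) f) (B : Fin n) :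
    ContDiff ℝ (⊤ : ℕ∞) (fun y => pd f B y) := by
  unfold pd
  exact (hf.fderiv_right (by simp)).clm_apply contDiff_const

lemma pd_pd_symm {n : ℕ} (f : (Fin n → ℝ) → ℝ) (hf : ContDiff ℝ (⊤ : ℕ∞) f) (A B : Fin n)
    (x : Fin n → ℝ) :
    pd (fun y => pd f B y) A x = pd (fun y => pd f A y) B x := by
  have hd : ∀ y, HasFDerivAt f (fderiv ℝ f y) y :=
    fun y => (hf.differentiable (by simp) y).hasFDerivAt
  have hf' : ContDiff ℝ (⊤ : ℕ∞) (fderiv ℝ f) := hf.fderiv_right (by simp)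
  have hx : HasFDerivAt (fderiv ℝ f) (fderiv ℝ (fderiv ℝ f) x) x :=
    (hf'.differentiable (by simp) x).hasFDerivAt
  have key : ∀ v w : Fin n → ℝ,
      fderiv ℝ (fun y => fderiv ℝ f y v) x w = fderiv ℝ (fderiv ℝ f) x w v := by
    intro v w
    have h1 : HasFDerivAt (fun y => fderiv ℝ f y v)
        ((ContinuousLinearMap.apply ℝ ℝ v).comp (fderiv ℝ (fderiv ℝ f) x)) x :=
      (ContinuousLinearMap.apply ℝ ℝ v).hasFDerivAt.comp x hx
    rw [h1.fderiv]
    rfl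
  show fderiv ℝ (fun y => fderiv ℝ f y (Pi.single B 1)) x (Pi.single A 1)
      = fderiv ℝ (fun y => fderiv ℝ f y (Pi.single A 1)) x (Pi.single B 1)
  rw [key, key]
  exact second_derivative_symmetric hd hx _ _

lemma pair_Dsec {d : ℕ} (e : Sec d) (g : (Fin (2*d) → ℝ) → ℝ) (x : Fin (2*d) → ℝ) :
    pair e (Dsec g) x = (1/2) * ∑ B, e x B * pd g B x := by
  unfold pair Dsec
  rw [Finset.mul_sum]
  exact Finset.sum_congr rfl fun B _ => by rw [σd_σd]; ring

lemma cbr_expand {d : ℕ} (a b : Sec d) (x : Fin (2*d) → ℝ) (B : Fin (2*d)) :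
    cbr a b x B = ∑ A, (a x A * pd (fun y => b y B) A x
      - (1/2) * (a x A * pd (fun y => b y (σd d A)) (σd d B) x)
      - b x A * pd (fun y => a y B) A x
      + (1/2) * (b x A * pd (fun y => a y (σd d A)) (σd d B) x)) := by
  simp only [cbr, Finset.mul_sum, ← Finset.sum_sub_distrib]
  exact Finset.sum_congr rfl fun A _ => by ring

lemma pd_pair_Dsec {d : ℕ} (e : Sec d) (f : (Fin (2*d) → ℝ) → ℝ)
    (he : ContDiff ℝ (⊤ : ℕ∞) e) (hf : ContDiff ℝ (⊤ : ℕ∞) f) (A : Fin (2*d)) (x : Fin (2*d) → ℝ) :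
    pd (pair e (Dsec f)) A x
      = ∑ B, (pd (fun y => e y B) A x * ((1/2) * pd f B x)
          + e x B * ((1/2) * pd (fun y => pd f B y) A x)) := by
  have hdf : ∀ C, DifferentiableAt ℝ (fun z => pd f C z) x :=
    fun C => ((contDiff_pd f hf C).differentiable (by simp)).differentiableAt
  have h1 : pair e (Dsec f) = fun y => ∑ B, e y B * ((1/2) * pd f B y) := by
    funext y
    unfold pair Dsec
    exact Finset.sum_congr rfl fun B _ => by rw [σd_σd]
  rw [h1]
  refine (pd_sum_mul (fun B y => e y B) (fun B y => (1/2) * pd f B y) A x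
    (fun B => ((contDiff_pi.mp he B).differentiable (by simp)).differentiableAt)
    (fun B => (hdf B).const_mul _)).trans ?_
  exact Finset.sum_congr rfl fun B _ => by rw [pd_const_mul _ _ _ _ (hdf B)]

lemma T1_lemma {d : ℕ} (a b : Sec d) (f : (Fin (2*d) → ℝ) → ℝ)
    (hb : ContDiff ℝ (⊤ : ℕ∞) b) (hf : ContDiff ℝ (⊤ : ℕ∞) f) (x : Fin (2*d) → ℝ) :
    pair a (Dsec (pair b (Dsec f))) x
      = (1/4) * (∑ A, ∑ B, a x A * pd f B x * pd (fun y => b y B) A x)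
        + (1/4) * (∑ A, ∑ B, a x A * b x B * pd (fun y => pd f B y) A x) := by
  rw [pair_Dsec]
  calc (1/2) * ∑ A, a x A * pd (pair b (Dsec f)) A x
      = ∑ A, ∑ B, ((1/4) * (a x A * pd f B x * pd (fun y => b y B) A x)
          + (1/4) * (a x A * b x B * pd (fun y => pd f B y) A x)) := by
        rw [Finset.mul_sum]
        refine Finset.sum_congr rfl fun A _ => ?_
        rw [pd_pair_Dsec b f hb hf A x, Finset.mul_sum, Finset.mul_sum]
        exact Finset.sum_congr rfl fun B _ => by ring
    _ = _ := by simp only [Finset.sum_add_distrib, ← Finset.mul_sum]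

lemma pair_cbr_pd {d : ℕ} (a b : Sec d) (f : (Fin (2*d) → ℝ) → ℝ) (x : Fin (2*d) → ℝ) :
    pair (cbr a b) (Dsec f) x
      = (1/2) * (∑ A, ∑ B, a x A * pd f B x * pd (fun y => b y B) A x)
        - (1/4) * (∑ A, ∑ B, a x A * pd f B x * pd (fun y => b y (σd d A)) (σd d B) x)
        - (1/2) * (∑ A, ∑ B, b x A * pd f B x * pd (fun y => a y B) A x)
        + (1/4) * (∑ A, ∑ B, b x A * pd f B x * pd (fun y => a y (σd d A)) (σd d B) x) := by
  rw [pair_Dsec]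
  calc (1/2) * ∑ B, cbr a b x B * pd f B x
      = ∑ B, ∑ A, ((1/2) * (a x A * pd f B x * pd (fun y => b y B) A x)
          - (1/4) * (a x A * pd f B x * pd (fun y => b y (σd d A)) (σd d B) x)
          - (1/2) * (b x A * pd f B x * pd (fun y => a y B) A x)
          + (1/4) * (b x A * pd f B x * pd (fun y => a y (σd d A)) (σd d B) x)) := by
        rw [Finset.mul_sum]
        refine Finset.sum_congr rfl fun B _ => ?_
        rw [cbr_expand, Finset.sum_mul, Finset.mul_sum]
        exact Finset.sum_congr rfl fun A _ => by ring
    _ = ∑ A, ∑ B, ((1/2) * (a x A * pd f B x * pd (fun y => b y B) A x)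
          - (1/4) * (a x A * pd f B x * pd (fun y => b y (σd d A)) (σd d B) x)
          - (1/2) * (b x A * pd f B x * pd (fun y => a y B) A x)
          + (1/4) * (b x A * pd f B x * pd (fun y => a y (σd d A)) (σd d B) x)) :=
        Finset.sum_comm
    _ = _ := by simp only [Finset.sum_sub_distrib, Finset.sum_add_distrib, ← Finset.mul_sum]

lemma pair_cbr_Dsec {d : ℕ} (a b : Sec d) (f : (Fin (2*d) → ℝ) → ℝ)
    (ha : ContDiff ℝ (⊤ : ℕ∞) a) (hf : ContDiff ℝ (⊤ : ℕ∞) f) (x : Fin (2*d) → ℝ) :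
    pair (cbr a (Dsec f)) b x
      = (1/4) * (∑ A, ∑ B, b x A * a x B * pd (fun y => pd f B y) A x)
        - (1/2) * (∑ A, ∑ B, b x A * pd f B x * pd (fun y => a y (σd d A)) (σd d B) x)
        + (1/4) * (∑ A, ∑ B, b x A * pd f B x * pd (fun y => a y B) A x) := by
  have hdf : ∀ C, DifferentiableAt ℝ (fun z => pd f C z) x :=
    fun C => ((contDiff_pd f hf C).differentiable (by simp)).differentiableAt
  calc pair (cbr a (Dsec f)) b x
      = ∑ B, ∑ A,
        ((1/2) * (a x A * pd (fun y => pd f (σd d B) y) A x * b x (σd d B))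
          - (1/4) * (a x A * pd (fun y => pd f A y) (σd d B) x * b x (σd d B))
          - (1/2) * (pd f (σd d A) x * pd (fun y => a y B) A x * b x (σd d B))
          + (1/4) * (pd f (σd d A) x * pd (fun y => a y (σd d A)) (σd d B) x * b x (σd d B))) := by
        unfold pair
        refine Finset.sum_congr rfl fun B _ => ?_
        rw [cbr_expand, Finset.sum_mul]
        refine Finset.sum_congr rfl fun A _ => ?_
        simp only [Dsec]
        rw [σd_σd, pd_const_mul _ _ _ _ (hdf (σd d B)), pd_const_mul _ _ _ _ (hdf A)]
        ring
    _ = ∑ B, ∑ A,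
        ((1/2) * (a x A * pd (fun y => pd f B y) A x * b x B)
          - (1/4) * (a x A * pd (fun y => pd f A y) B x * b x B)
          - (1/2) * (pd f (σd d A) x * pd (fun y => a y (σd d B)) A x * b x B)
          + (1/4) * (pd f (σd d A) x * pd (fun y => a y (σd d A)) B x * b x B)) := by
        refine Fintype.sum_equiv (Function.Involutive.toPerm _ σd_inv) _ _ fun B => ?_
        simp only [Function.Involutive.coe_toPerm, σd_σd]
    _ = ∑ B, ∑ A,
        ((1/2) * (a x A * pd (fun y => pd f B y) A x * b x B)
          - (1/4) * (a x A * pd (fun y => pd f A y) B x * b x B)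
          - (1/2) * (pd f A x * pd (fun y => a y (σd d B)) (σd d A) x * b x B)
          + (1/4) * (pd f A x * pd (fun y => a y A) B x * b x B)) := by
        refine Finset.sum_congr rfl fun B _ => ?_
        calc ∑ A, ((1/2) * (a x A * pd (fun y => pd f B y) A x * b x B)
              - (1/4) * (a x A * pd (fun y => pd f A y) B x * b x B)
              - (1/2) * (pd f (σd d A) x * pd (fun y => a y (σd d B)) A x * b x B)
              + (1/4) * (pd f (σd d A) x * pd (fun y => a y (σd d A)) B x * b x B))
            = (∑ A, ((1/2) * (a x A * pd (fun y => pd f B y) A x * b x B)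
                - (1/4) * (a x A * pd (fun y => pd f A y) B x * b x B)))
              + ∑ A, (-((1/2) * (pd f (σd d A) x * pd (fun y => a y (σd d B)) A x * b x B))
                + (1/4) * (pd f (σd d A) x * pd (fun y => a y (σd d A)) B x * b x B)) := by
              rw [← Finset.sum_add_distrib]
              exact Finset.sum_congr rfl fun A _ => by ring
          _ = (∑ A, ((1/2) * (a x A * pd (fun y => pd f B y) A x * b x B)
                - (1/4) * (a x A * pd (fun y => pd f A y) B x * b x B)))
              + ∑ A, (-((1/2) * (pd f A x * pd (fun y => a y (σd d B)) (σd d A) x * b x B))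
                + (1/4) * (pd f A x * pd (fun y => a y A) B x * b x B)) := by
              congr 1
              refine Fintype.sum_equiv (Function.Involutive.toPerm _ σd_inv) _ _ fun A => ?_
              simp only [Function.Involutive.coe_toPerm, σd_σd]
          _ = _ := by
              rw [← Finset.sum_add_distrib]
              exact Finset.sum_congr rfl fun A _ => by ring
    _ = ∑ B, ∑ A,
        ((1/4) * (b x B * a x A * pd (fun y => pd f A y) B x)
          - (1/2) * (b x B * pd f A x * pd (fun y => a y (σd d B)) (σd d A) x)
          + (1/4) * (b x B * pd f A x * pd (fun y => a y A) B x)) := by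
        refine Finset.sum_congr rfl fun B _ => Finset.sum_congr rfl fun A _ => ?_
        rw [pd_pd_symm f hf A B x]
        ring
    _ = _ := by simp only [Finset.sum_sub_distrib, Finset.sum_add_distrib, ← Finset.mul_sum]

/-- Vanishing of the curved L∞-map μ₄(μ₀,e₁,e₂,f) for the flat DFT algebroid. -/
theorem mu4_mu0_e_e_f_vanishes {d : ℕ} (hd : 1 ≤ d) (e₁ e₂ : Sec d)
    (f : (Fin (2*d) → ℝ) → ℝ)
    (he₁ : ContDiff ℝ (⊤ : ℕ∞) e₁) (he₂ : ContDiff ℝ (⊤ : ℕ∞) e₂) (hf : ContDiff ℝ (⊤ : ℕ∞) f) :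
    ∀ x : Fin (2*d) → ℝ,
      pair e₁ (Dsec (pair e₂ (Dsec f))) x - pair e₂ (Dsec (pair e₁ (Dsec f))) x
        - pair (cbr e₁ e₂) (Dsec f) x + Nform e₁ e₂ (Dsec f) x = 0 := by
  intro x
  have hW : pair (cbr (Dsec f) e₁) e₂ x = -pair (cbr e₁ (Dsec f)) e₂ x := by
    unfold pair
    rw [← Finset.sum_neg_distrib]
    refine Finset.sum_congr rfl fun A _ => ?_
    have h : cbr (Dsec f) e₁ x A = -cbr e₁ (Dsec f) x A := by simp only [cbr]; ring
    rw [h]; ring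
  have hqq : (∑ A, ∑ B, e₁ x A * e₂ x B * pd (fun y => pd f B y) A x)
      = ∑ A, ∑ B, e₂ x A * e₁ x B * pd (fun y => pd f B y) A x := by
    rw [Finset.sum_comm]
    refine Finset.sum_congr rfl fun A _ => Finset.sum_congr rfl fun B _ => ?_
    rw [pd_pd_symm f hf B A x]
    ring
  simp only [Nform]
  rw [T1_lemma e₁ e₂ f he₂ hf x, T1_lemma e₂ e₁ f he₁ hf x, pair_cbr_pd e₁ e₂ f x,
    pair_cbr_Dsec e₂ e₁ f he₂ hf x, hW, pair_cbr_Dsec e₁ e₂ f he₁ hf x, hqq]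
  ring

end
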